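/- If S₁ and S₂ are symmetric real k×k matrices with exp(S₁) = exp(S₂), then S₁ = S₂; that is, the matrix exponential is injective on the set of symmetric real matrices. -/

import Mathlib

open Matrix

-- `CFC.log` needs a normed algebra structure on matrices; every choice of norm induces the same
-- topology, so `NormedSpace.exp` is unaffected.
open scoped Matrix.Norms.L2Operator in
theorem Matrix.IsSymm.log_exp {n : Type*} [Fintype n] [DecidableEq n] {S : Matrix n n ℝ}
    (hS : S.IsSymm) : CFC.log (NormedSpace.exp S) = S :=
  CFC.log_exp S (isHermitian_iff_isSymm.mpr hS)

/-- The matrix exponential is injective on symmetric real matrices. -/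
theorem exp_injective_on_symm (k : ℕ) (S₁ S₂ : Matrix (Fin k) (Fin k) ℝ)
    (h₁ : S₁.IsSymm) (h₂ : S₂.IsSymm)
    (h : NormedSpace.exp S₁ = NormedSpace.exp S₂) :
    S₁ = S₂ := by
  rw [← h₁.log_exp, h, h₂.log_exp]
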